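/- arXiv:2409.14252 — 4 statements merged into one kernel-verified Lean document; each statement's English description precedes it below -/
import Mathlib

section
/- Let G be a finite set equipped with a strict partial order < (the happened-before relation), let V ⊆ G, and define Events(V) = V ∪ {e ∈ G | ∃ v ∈ V, e < v}. Then the following two conditions are equivalent: (1) every event in Events(V) happened before every event in G \ Events(V), i.e., ∀ e₁ ∈ Events(V), ∀ e₂ ∈ G \ Events(V), e₁ < e₂; and (2) every event of G is either in Events(V) or happened after all elements of V, i.e., ∀ e₁ ∈ G, e₁ ∈ Events(V) ∨ (∀ e₂ ∈ V, e₂ < e₁). -/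
def Events {G : Type*} (lt : G → G → Prop) (V : Set G) : Set G :=
  V ∪ {e | ∃ v ∈ V, lt e v}

theorem subset_Events {G : Type*} (lt : G → G → Prop) (V : Set G) : V ⊆ Events lt V :=
  Set.subset_union_left

theorem lt_of_mem_Events_of_forall_lt {G : Type*} {lt : G → G → Prop}
    (htrans : ∀ a b c : G, lt a b → lt b c → lt a c) {V : Set G} {e x : G}
    (he : e ∈ Events lt V) (hx : ∀ v ∈ V, lt v x) : lt e x := by
  rcases he with he | ⟨v, hv, hev⟩
  · exact hx e he
  · exact htrans e v x hev (hx v hv)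

theorem critical_version_iff_general {G : Type*}
    (lt : G → G → Prop)
    (htrans : ∀ a b c : G, lt a b → lt b c → lt a c)
    (V : Set G) :
    (∀ e₁ ∈ Events lt V, ∀ e₂ : G, e₂ ∉ Events lt V → lt e₁ e₂) ↔
    (∀ e₁ : G, e₁ ∈ Events lt V ∨ ∀ e₂ ∈ V, lt e₂ e₁) := by
  constructor
  · intro hsplit e₁
    by_cases he₁ : e₁ ∈ Events lt V
    · exact Or.inl he₁
    · exact Or.inr fun e₂ he₂ => hsplit e₂ (subset_Events lt V he₂) e₁ he₁
  · intro hcover e₁ he₁ e₂ he₂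
    exact lt_of_mem_Events_of_forall_lt htrans he₁ ((hcover e₂).resolve_left he₂)

/-- For a finite event graph `G` (modeled as a finite type) with
strict partial order `lt` and a version `V ⊆ G`, the following are equivalent:
(1) every event in `Events V` happened before every event not in `Events V`;
(2) every event is either in `Events V` or happened after all elements of `V`. -/
theorem critical_version_iff {G : Type*} [Fintype G]
    (lt : G → G → Prop)
    (hirr : ∀ e : G, ¬ lt e e)
    (htrans : ∀ a b c : G, lt a b → lt b c → lt a c)
    (V : Set G) :
    (∀ e₁ ∈ Events lt V, ∀ e₂ : G, e₂ ∉ Events lt V → lt e₁ e₂) ↔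
    (∀ e₁ : G, e₁ ∈ Events lt V ∨ ∀ e₂ ∈ V, lt e₂ e₁) :=
  critical_version_iff_general lt htrans V
end

section
/- Let G be a finite set equipped with a strict partial order < (the happened-before relation), and for V ⊆ G define Events(V) = V ∪ {e ∈ G | ∃ v ∈ V, e < v}. If V₁ and V₂ are both critical versions of G (i.e., for each Vᵢ, every event in Events(Vᵢ) happened before every event in G \ Events(Vᵢ)), then Events(V₁) ⊆ Events(V₂) or Events(V₂) ⊆ Events(V₁). Consequently, the event sets of the critical versions of a finite event graph form a chain under inclusion, so among finitely many critical versions there is a latest one. -/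
/-- A version `V` is critical if every event in `Events V` happened before
every event not in `Events V`. -/
def IsCriticalVersion {G : Type*} (lt : G → G → Prop) (V : Set G) : Prop :=
  ∀ e₁ ∈ Events lt V, ∀ e₂ : G, e₂ ∉ Events lt V → lt e₁ e₂

theorem subset_or_subset_of_forall_lt_of_notMem {G : Type*} {lt : G → G → Prop}
    (hasymm : ∀ a b, lt a b → ¬ lt b a) {S T : Set G}
    (hS : ∀ a ∈ S, ∀ b, b ∉ S → lt a b) (hT : ∀ a ∈ T, ∀ b, b ∉ T → lt a b) :
    S ⊆ T ∨ T ⊆ S := by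
  rw [or_iff_not_imp_left, Set.not_subset]
  rintro ⟨a, haS, haT⟩ b hbT
  by_contra hbS
  exact hasymm a b (hS a haS b hbS) (hT b hbT a haT)

theorem critical_versions_chain_general {G : Type*}
    (lt : G → G → Prop)
    (hirr : ∀ e : G, ¬ lt e e)
    (htrans : ∀ a b c : G, lt a b → lt b c → lt a c)
    (V₁ V₂ : Set G)
    (h₁ : IsCriticalVersion lt V₁)
    (h₂ : IsCriticalVersion lt V₂) :
    Events lt V₁ ⊆ Events lt V₂ ∨ Events lt V₂ ⊆ Events lt V₁ :=
  subset_or_subset_of_forall_lt_of_notMem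
    (fun a b hab hba => hirr a (htrans a b a hab hba)) h₁ h₂

/-- The event sets of any two critical versions of a finite event
graph are comparable under inclusion; hence critical versions form a chain. -/
theorem critical_versions_chain {G : Type*} [Fintype G]
    (lt : G → G → Prop)
    (hirr : ∀ e : G, ¬ lt e e)
    (htrans : ∀ a b c : G, lt a b → lt b c → lt a c)
    (V₁ V₂ : Set G)
    (h₁ : IsCriticalVersion lt V₁)
    (h₂ : IsCriticalVersion lt V₂) :
    Events lt V₁ ⊆ Events lt V₂ ∨ Events lt V₂ ⊆ Events lt V₁ :=
  critical_versions_chain_general lt hirr htrans V₁ V₂ h₁ h₂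
end

section
/- Let G be a finite set equipped with a strict partial order < (the happened-before relation), and let E and E' be two topological sorts of G (lists containing each element of G exactly once, in which x appears before y whenever x < y). Then E can be transformed into E' by a finite sequence of steps, where each step swaps two adjacent entries a, b of the current list that are concurrent (a ≠ b, ¬(a < b), ¬(b < a)), and every intermediate list in this sequence is itself a topological sort of G. -/
/-!
Induct on `E'`. Its first event `a` is concurrent with every event `x` preceding it in `E`:
`x` comes before `a` in `E` and after `a` in `E'`. So `a` can be bubbled to the front of `E`
by concurrent swaps, each of which keeps the list a topological sort, and what remains is the
same problem for the two tails behind the common prefix `a`.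
-/

/-- A topological sort of the finite event graph `G` (modeled as a finite type):
a list containing each element exactly once, in which `x` appears before `y`
whenever `lt x y`. -/
def IsTopSort {G : Type*} [DecidableEq G] (lt : G → G → Prop) (l : List G) : Prop :=
  l.Nodup ∧ (∀ x : G, x ∈ l) ∧ ∀ x y : G, lt x y → l.idxOf x < l.idxOf y

/-- One step swapping two adjacent concurrent entries `a`, `b` of a list. -/
def ConcurrentSwap {G : Type*} (lt : G → G → Prop) (l l' : List G) : Prop :=
  ∃ (l₁ l₂ : List G) (a b : G), a ≠ b ∧ ¬ lt a b ∧ ¬ lt b a ∧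
    l = l₁ ++ [a, b] ++ l₂ ∧ l' = l₁ ++ [b, a] ++ l₂

def TopSortSwap {G : Type*} [DecidableEq G] (lt : G → G → Prop) (l l' : List G) : Prop :=
  ConcurrentSwap lt l l' ∧ IsTopSort lt l'

open Relation

namespace IsTopSort

variable {G : Type*} [DecidableEq G] {lt : G → G → Prop}

theorem irrefl {l : List G} (h : IsTopSort lt l) (e : G) : ¬ lt e e :=
  fun he => (h.2.2 e e he).false

theorem pairwise {l : List G} (h : IsTopSort lt l) : l.Pairwise fun x y => ¬ lt y x := by
  refine List.pairwise_iff_getElem.mpr fun i j hi hj hij hji => ?_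
  have := h.2.2 _ _ hji
  rw [h.1.idxOf_getElem, h.1.idxOf_getElem] at this
  omega

theorem not_lt_of_mem_append {l₁ l₂ : List G} (h : IsTopSort lt (l₁ ++ l₂)) {x y : G}
    (hx : x ∈ l₁) (hy : y ∈ l₂) : ¬ lt y x :=
  (List.pairwise_append.mp h.pairwise).2.2 x hx y hy

theorem of_perm {l l' : List G} (h : IsTopSort lt l) (hp : l.Perm l')
    (hpw : l'.Pairwise fun x y => ¬ lt y x) : IsTopSort lt l' := by
  have hmem : ∀ x, x ∈ l' := fun x => hp.mem_iff.mp (h.2.1 x)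
  refine ⟨hp.nodup_iff.mp h.1, hmem, fun x y hxy => ?_⟩
  have hx := List.idxOf_lt_length_iff.mpr (hmem x)
  have hy := List.idxOf_lt_length_iff.mpr (hmem y)
  rcases lt_trichotomy (l'.idxOf x) (l'.idxOf y) with hlt | heq | hgt
  · exact hlt
  · rw [List.idxOf_inj (hmem x)] at heq
    exact absurd (heq ▸ hxy) (h.irrefl y)
  · have := List.pairwise_iff_getElem.mp hpw _ _ hy hx hgt
    rw [List.getElem_idxOf, List.getElem_idxOf] at this
    exact absurd hxy this

theorem swap {l₁ l₂ : List G} {a b : G} (h : IsTopSort lt (l₁ ++ a :: b :: l₂))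
    (hab : ¬ lt a b) : IsTopSort lt (l₁ ++ b :: a :: l₂) := by
  refine h.of_perm (.append_left l₁ (.swap b a l₂)) ?_
  have := h.pairwise
  simp only [List.pairwise_append, List.pairwise_cons, List.mem_cons] at this ⊢
  grind

theorem topSortSwap {l₁ l₂ : List G} {a b : G} (h : IsTopSort lt (l₁ ++ a :: b :: l₂))
    (hab : ¬ lt a b) (hba : ¬ lt b a) :
    TopSortSwap lt (l₁ ++ a :: b :: l₂) (l₁ ++ b :: a :: l₂) := by
  have hne : a ≠ b := by
    have := (List.nodup_append.mp h.1).2.1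
    simp_all
  exact ⟨⟨l₁, l₂, a, b, hne, hab, hba, by simp, by simp⟩, h.swap hab⟩

theorem of_reflTransGen {l l' : List G} (hl : IsTopSort lt l)
    (h : ReflTransGen (TopSortSwap lt) l l') : IsTopSort lt l' := by
  induction h with
  | refl => exact hl
  | tail _ hstep _ => exact hstep.2

theorem reflTransGen_bubble {l p r : List G} {a : G}
    (hp : ∀ x ∈ p, ¬ lt x a ∧ ¬ lt a x) (h : IsTopSort lt (l ++ p ++ a :: r)) :
    ReflTransGen (TopSortSwap lt) (l ++ p ++ a :: r) (l ++ a :: (p ++ r)) := by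
  induction p generalizing l with
  | nil => simpa using .refl
  | cons b q ih =>
    have hq : ReflTransGen (TopSortSwap lt) (l ++ b :: q ++ a :: r) (l ++ b :: a :: (q ++ r)) := by
      simpa using ih (l := l ++ [b]) (fun x hx => hp x (List.mem_cons_of_mem b hx)) (by simpa using h)
    have hba := hp b List.mem_cons_self
    refine hq.tail ?_
    simpa using (h.of_reflTransGen hq).topSortSwap hba.1 hba.2

theorem reflTransGen_of_perm {l E E' : List G} (h : IsTopSort lt (l ++ E))
    (h' : IsTopSort lt (l ++ E')) (hp : E.Perm E') :
    ReflTransGen (TopSortSwap lt) (l ++ E) (l ++ E') := by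
  induction E' generalizing l E with
  | nil => rw [hp.eq_nil]
  | cons a t ih =>
    obtain ⟨p, r, rfl⟩ := List.append_of_mem (hp.mem_iff.mpr (List.mem_cons_self (a := a)))
    rw [← List.append_assoc] at h
    replace h' : IsTopSort lt (l ++ [a] ++ t) := by simpa using h'
    have hconc : ∀ x ∈ p, ¬ lt x a ∧ ¬ lt a x := by
      intro x hx
      have hxa : x ≠ a := (List.nodup_append.mp h.1).2.2 x (by simp [hx]) a (by simp)
      have hxt : x ∈ t := by simpa [hxa] using (hp.mem_iff (a := x)).mp (by simp [hx])
      exact ⟨h'.not_lt_of_mem_append (by simp) hxt, h.not_lt_of_mem_append (by simp [hx]) (by simp)⟩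
    have hbubble := h.reflTransGen_bubble hconc
    have hrest := ih (l := l ++ [a]) (E := p ++ r) (by simpa using h.of_reflTransGen hbubble)
      h' (List.perm_cons a |>.mp (List.perm_middle.symm.trans hp))
    simpa using hbubble.trans (by simpa using hrest)

end IsTopSort

theorem topSorts_connected_by_concurrent_swaps_general {G : Type*} [DecidableEq G]
    (lt : G → G → Prop)
    (E E' : List G) (hE : IsTopSort lt E) (hE' : IsTopSort lt E') :
    Relation.ReflTransGen (fun l l' => ConcurrentSwap lt l l' ∧ IsTopSort lt l') E E' := by
  have hp : E.Perm E' :=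
    (List.perm_ext_iff_of_nodup hE.1 hE'.1).mpr fun x => by simp [hE.2.1 x, hE'.2.1 x]
  exact IsTopSort.reflTransGen_of_perm (l := []) hE hE' hp

/-- Any topological sort `E` can be transformed into any other
topological sort `E'` by a finite sequence of swaps of adjacent concurrent
events, with every intermediate list itself a topological sort. -/
theorem topSorts_connected_by_concurrent_swaps {G : Type*} [Fintype G] [DecidableEq G]
    (lt : G → G → Prop)
    (hirr : ∀ e : G, ¬ lt e e)
    (htrans : ∀ a b c : G, lt a b → lt b c → lt a c)
    (E E' : List G) (hE : IsTopSort lt E) (hE' : IsTopSort lt E') :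
    Relation.ReflTransGen (fun l l' => ConcurrentSwap lt l l' ∧ IsTopSort lt l') E E' :=
  topSorts_connected_by_concurrent_swaps_general lt E E' hE hE'
end

section
/- Let G be a finite set equipped with a strict partial order < (the happened-before relation), let S be any type of states, and let f : List G → S be a function satisfying the commutation property: for all lists l₁, l₂ and all concurrent a, b ∈ G (a ≠ b, ¬(a < b), ¬(b < a)), f(l₁ ++ [a, b] ++ l₂) = f(l₁ ++ [b, a] ++ l₂). Then f takes the same value on every topological sort of G: if E and E' are two lists each containing every element of G exactly once with x appearing before y whenever x < y, then f(E) = f(E'). In other words, if the replay of any two adjacent concurrent events commutes, then replaying the event graph is a deterministic function of the graph, independent of the chosen topological sort order. -/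
section
variable {G S : Type*} {lt : G → G → Prop} {f : List G → S}

def ReplayCommutes (lt : G → G → Prop) (f : List G → S) : Prop :=
  ∀ (l₁ l₂ : List G) (a b : G), a ≠ b → ¬ lt a b → ¬ lt b a →
    f (l₁ ++ [a, b] ++ l₂) = f (l₁ ++ [b, a] ++ l₂)

namespace ReplayCommutes

theorem cons (hf : ReplayCommutes lt f) (c : G) : ReplayCommutes lt (fun l => f (c :: l)) :=
  fun l₁ l₂ a b hab hlt hgt => hf (c :: l₁) l₂ a b hab hlt hgt

theorem append_cons_eq_cons_append (hf : ReplayCommutes lt f) {a : G} {u : List G}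
    (hu : ∀ y ∈ u, y ≠ a ∧ ¬ lt y a ∧ ¬ lt a y) (v : List G) :
    f (u ++ a :: v) = f (a :: (u ++ v)) := by
  induction u generalizing f with
  | nil => rfl
  | cons c u ih =>
    obtain ⟨hca, hlt, hgt⟩ := hu c List.mem_cons_self
    calc f (c :: u ++ a :: v) = f (c :: a :: (u ++ v)) :=
          ih (hf.cons c) fun y hy => hu y (List.mem_cons_of_mem c hy)
      _ = f (a :: c :: (u ++ v)) := hf [] (u ++ v) c a hca hlt hgt

theorem eq_of_perm (hf : ReplayCommutes lt f) {l l' : List G} (hperm : l.Perm l')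
    (hl : l.Pairwise fun x y => ¬ lt y x) (hl' : l'.Pairwise fun x y => ¬ lt y x) :
    f l = f l' := by
  induction l' generalizing l f with
  | nil => rw [hperm.eq_nil]
  | cons a t ih =>
    obtain ⟨u, v, rfl, hau⟩ := List.eq_append_cons_of_mem (hperm.mem_iff.2 List.mem_cons_self)
    have hconc : ∀ y ∈ u, y ≠ a ∧ ¬ lt y a ∧ ¬ lt a y := by
      intro y hy
      have hya : y ≠ a := fun h => hau (h ▸ hy)
      have hyt : y ∈ t :=
        (List.mem_cons.1 (hperm.mem_iff.1 (List.mem_append_left _ hy))).resolve_left hya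
      exact ⟨hya, List.rel_of_pairwise_cons hl' hyt,
        (List.pairwise_append.1 hl).2.2 y hy a List.mem_cons_self⟩
    have hsub : (u ++ v).Sublist (u ++ a :: v) := (List.sublist_cons_self a v).append_left u
    rw [hf.append_cons_eq_cons_append hconc]
    exact ih (hf.cons a) (List.perm_middle.symm.trans hperm).cons_inv (hl.sublist hsub)
      hl'.of_cons

end ReplayCommutes

namespace IsTopSort
variable [DecidableEq G]

theorem pairwise_not_lt {l : List G} (hl : IsTopSort lt l) : l.Pairwise fun x y => ¬ lt y x := by
  rw [List.pairwise_iff_getElem]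
  intro i j hi hj hij hji
  have h := hl.2.2 _ _ hji
  rw [hl.1.idxOf_getElem j hj, hl.1.idxOf_getElem i hi] at h
  omega

theorem perm {l l' : List G} (hl : IsTopSort lt l) (hl' : IsTopSort lt l') : l.Perm l' :=
  (List.perm_ext_iff_of_nodup hl.1 hl'.1).2 fun x => iff_of_true (hl.2.1 x) (hl'.2.1 x)

end IsTopSort

end

theorem replay_deterministic_general {G : Type*} [DecidableEq G] {S : Type*}
    (lt : G → G → Prop)
    (f : List G → S)
    (hcomm : ∀ (l₁ l₂ : List G) (a b : G), a ≠ b → ¬ lt a b → ¬ lt b a →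
      f (l₁ ++ [a, b] ++ l₂) = f (l₁ ++ [b, a] ++ l₂))
    (E E' : List G) (hE : IsTopSort lt E) (hE' : IsTopSort lt E') :
    f E = f E' :=
  ReplayCommutes.eq_of_perm hcomm (hE.perm hE') hE.pairwise_not_lt hE'.pairwise_not_lt

/-- If a replay function `f` on lists of events commutes on
adjacent concurrent events, then it takes the same value on every topological
sort of the event graph: replay is a deterministic function of the graph. -/
theorem replay_deterministic {G : Type*} [Fintype G] [DecidableEq G] {S : Type*}
    (lt : G → G → Prop)
    (hirr : ∀ e : G, ¬ lt e e)
    (htrans : ∀ a b c : G, lt a b → lt b c → lt a c)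
    (f : List G → S)
    (hcomm : ∀ (l₁ l₂ : List G) (a b : G), a ≠ b → ¬ lt a b → ¬ lt b a →
      f (l₁ ++ [a, b] ++ l₂) = f (l₁ ++ [b, a] ++ l₂))
    (E E' : List G) (hE : IsTopSort lt E) (hE' : IsTopSort lt E') :
    f E = f E' :=
  replay_deterministic_general lt f hcomm E E' hE hE'
end
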